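/- Let M be a finite metric space, {y₁,…,y_k} ⊂ M with M \ {yᵢ} nonempty, dᵢ = dist(yᵢ, M \ {y₁,…,y_k}), and C = max{ max_{i≠j} (dᵢ+dⱼ)/d(yᵢ,yⱼ), 1 }. Then F(M) contains a C-complemented subspace C-isomorphic to ℓ₁^k, and Lip₀(M) contains a C-complemented subspace C-isomorphic to ℓ∞^k. -/
import Mathlib


open Finset

/-- The Lipschitz-free (Kantorovich–Rubinstein) norm of a molecule on a finite
metric space, expressed via duality with `1`-Lipschitz functions. -/
noncomputable def freeNorm (M : Type*) [MetricSpace M] [Fintype M] (m : M → ℝ) : ℝ :=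
  sSup {r : ℝ | ∃ f : M → ℝ, LipschitzWith 1 f ∧ r = ∑ p, m p * f p}

/-- Molecules: the underlying vector space of the Lipschitz free space on a finite space;
equipped with `freeNorm` it is the Lipschitz free space `F(M)`. -/
def molecules (M : Type*) [Fintype M] : Submodule ℝ (M → ℝ) where
  carrier := {m | ∑ p, m p = 0}
  add_mem' := by
    intro a b ha hb
    simp only [Set.mem_setOf_eq, Pi.add_apply, Finset.sum_add_distrib] at *
    rw [ha, hb]; ring
  zero_mem' := by simp
  smul_mem' := by
    intro c a ha
    simp only [Set.mem_setOf_eq, Pi.smul_apply, smul_eq_mul, ← Finset.mul_sum] at *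
    rw [ha]; ring

/-- The norm of `ℓ₁^k`. -/
def l1norm {k : ℕ} (x : Fin k → ℝ) : ℝ := ∑ i, |x i|

/-- The Lipschitz constant of a function on a metric space. -/
noncomputable def lipNorm (M : Type*) [MetricSpace M] (f : M → ℝ) : ℝ :=
  sInf {K : ℝ | 0 ≤ K ∧ ∀ u v : M, |f u - f v| ≤ K * dist u v}

section auxlip
set_option linter.unusedSectionVars false
variable {M : Type*} [Fintype M] [MetricSpace M]

lemma lipset_nonempty (f : M → ℝ) :
    ∃ K, 0 ≤ K ∧ ∀ u v : M, |f u - f v| ≤ K * dist u v := by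
  refine ⟨∑ p : M × M, |f p.1 - f p.2| / dist p.1 p.2,
    Finset.sum_nonneg fun p _ => div_nonneg (abs_nonneg _) dist_nonneg, ?_⟩
  intro u v
  rcases eq_or_ne u v with rfl | huv
  · simp
  · have hduv : 0 < dist u v := dist_pos.2 huv
    have h1 : |f u - f v| / dist u v ≤ ∑ p : M × M, |f p.1 - f p.2| / dist p.1 p.2 :=
      Finset.single_le_sum (f := fun p : M × M => |f p.1 - f p.2| / dist p.1 p.2)
        (fun p _ => div_nonneg (abs_nonneg _) dist_nonneg) (Finset.mem_univ (u, v))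
    calc |f u - f v| = |f u - f v| / dist u v * dist u v := by field_simp
      _ ≤ _ := mul_le_mul_of_nonneg_right h1 dist_nonneg

lemma lipNorm_nonneg (f : M → ℝ) : 0 ≤ lipNorm M f := by
  obtain ⟨K, hK⟩ := lipset_nonempty f
  exact le_csInf ⟨K, hK⟩ fun b hb => hb.1

lemma lipNorm_le (f : M → ℝ) {K : ℝ} (hK : 0 ≤ K) (h : ∀ u v : M, |f u - f v| ≤ K * dist u v) :
    lipNorm M f ≤ K :=
  csInf_le ⟨0, fun b hb => hb.1⟩ ⟨hK, h⟩

lemma abs_sub_le_lipNorm (f : M → ℝ) (u v : M) : |f u - f v| ≤ lipNorm M f * dist u v := by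
  rcases eq_or_ne u v with rfl | huv
  · simp
  · have hduv : 0 < dist u v := dist_pos.2 huv
    have h1 : |f u - f v| / dist u v ≤ lipNorm M f := by
      obtain ⟨K, hK⟩ := lipset_nonempty f
      refine le_csInf ⟨K, hK⟩ fun b hb => ?_
      exact (div_le_iff₀ hduv).2 (hb.2 u v)
    calc |f u - f v| = |f u - f v| / dist u v * dist u v := by field_simp
      _ ≤ _ := mul_le_mul_of_nonneg_right h1 dist_nonneg
end auxlip

section aux0
set_option linter.unusedSectionVars false
variable {M : Type*} [Fintype M] [MetricSpace M]

lemma freeNorm_le (m : M → ℝ) {B : ℝ} (hB : 0 ≤ B)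
    (h : ∀ f : M → ℝ, LipschitzWith 1 f → ∑ p, m p * f p ≤ B) : freeNorm M m ≤ B :=
  Real.sSup_le (by rintro r ⟨f, hf, rfl⟩; exact h f hf) hB

lemma freeNorm_bdd (m : M → ℝ) (o : M) (hm : ∑ p, m p = 0) :
    BddAbove {r : ℝ | ∃ f : M → ℝ, LipschitzWith 1 f ∧ r = ∑ p, m p * f p} := by
  refine ⟨∑ p, |m p| * dist p o, ?_⟩
  rintro r ⟨f, hf, rfl⟩
  have h1 : ∑ p, m p * (f p - f o) = ∑ p, m p * f p := by
    simp [mul_sub, Finset.sum_sub_distrib, ← Finset.sum_mul, hm]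
  rw [← h1]
  refine Finset.sum_le_sum fun p _ => ?_
  calc m p * (f p - f o) ≤ |m p * (f p - f o)| := le_abs_self _
    _ = |m p| * |f p - f o| := abs_mul _ _
    _ ≤ |m p| * dist p o := by
        refine mul_le_mul_of_nonneg_left ?_ (abs_nonneg _)
        have h2 := hf.dist_le_mul p o
        rwa [Real.dist_eq, NNReal.coe_one, one_mul] at h2

lemma le_freeNorm (m : M → ℝ) (o : M) (hm : ∑ p, m p = 0) (f : M → ℝ) (hf : LipschitzWith 1 f) :
    ∑ p, m p * f p ≤ freeNorm M m :=
  le_csSup (freeNorm_bdd m o hm) ⟨f, hf, rfl⟩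

lemma lip_of_abs (f : M → ℝ) (h : ∀ u v : M, |f u - f v| ≤ dist u v) : LipschitzWith 1 f := by
  refine LipschitzWith.of_dist_le_mul fun u v => ?_
  rw [Real.dist_eq, NNReal.coe_one, one_mul]
  exact h u v
end aux0

/-- with `dᵢ = dist(yᵢ, M \ {y₁,…,y_k})` and
`C = max{max_{i≠j}(dᵢ+dⱼ)/d(yᵢ,yⱼ), 1}`, the space `F(M)` contains a `C`-complemented
subspace `C`-isomorphic to `ℓ₁^k`, and `Lip₀(M)` contains a `C`-complemented subspace
`C`-isomorphic to `ℓ∞^k`. (The norm on `Fin k → ℝ` below is the sup norm.) -/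
theorem stmt5 {M : Type*} [Fintype M] [MetricSpace M] [DecidableEq M] {k : ℕ}
    (y : Fin k → M) (hy : Function.Injective y) (hne : (Set.range y)ᶜ.Nonempty)
    (O : M) (hO : O ∈ (Set.range y)ᶜ)
    (d : Fin k → ℝ) (hd : ∀ i, d i = sInf {r | ∃ z ∈ (Set.range y)ᶜ, r = dist (y i) z})
    (C : ℝ)
    (hC : C = max (⨆ (i) (j) (_ : i ≠ j), (d i + d j) / dist (y i) (y j)) 1) :
    (∃ Y : Submodule ℝ (M → ℝ), Y ≤ molecules M ∧
      (∃ T : Y ≃ₗ[ℝ] (Fin k → ℝ),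
        ∀ u : Y, l1norm (T u) ≤ freeNorm M u ∧ freeNorm M u ≤ C * l1norm (T u)) ∧
      (∃ P : (M → ℝ) →ₗ[ℝ] (M → ℝ),
        (∀ m ∈ molecules M, P m ∈ Y) ∧ (∀ u ∈ Y, P u = u) ∧
        ∀ m ∈ molecules M, freeNorm M (P m) ≤ C * freeNorm M m)) ∧
    (∃ Z : Submodule ℝ (M → ℝ), (∀ f ∈ Z, f O = 0) ∧
      (∃ S : Z ≃ₗ[ℝ] (Fin k → ℝ),
        ∀ f : Z, ‖S f‖ ≤ lipNorm M f ∧ lipNorm M f ≤ C * ‖S f‖) ∧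
      (∃ P : (M → ℝ) →ₗ[ℝ] (M → ℝ),
        (∀ f : M → ℝ, f O = 0 → P f ∈ Z) ∧ (∀ f ∈ Z, P f = f) ∧
        ∀ f : M → ℝ, f O = 0 → lipNorm M (P f) ≤ C * lipNorm M f)) := by
  classical
  have hC1 : (1:ℝ) ≤ C := hC ▸ le_max_right _ _
  have hC0 : (0:ℝ) < C := lt_of_lt_of_le one_pos hC1
  have hdle : ∀ i, ∀ w ∈ (Set.range y)ᶜ, d i ≤ dist (y i) w := by
    intro i w hw
    rw [hd]
    exact csInf_le ⟨0, by rintro r ⟨w', _, rfl⟩; exact dist_nonneg⟩ ⟨w, hw, rfl⟩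
  have hzex : ∀ i, ∃ w ∈ (Set.range y)ᶜ, d i = dist (y i) w := by
    intro i
    have hfin : {r | ∃ z ∈ (Set.range y)ᶜ, r = dist (y i) z}.Finite :=
      (Set.finite_range fun w : M => dist (y i) w).subset
        (by rintro r ⟨w, _, rfl⟩; exact ⟨w, rfl⟩)
    obtain ⟨w0, hw0⟩ := hne
    have hnonempty : {r | ∃ z ∈ (Set.range y)ᶜ, r = dist (y i) z}.Nonempty :=
      ⟨_, ⟨w0, hw0, rfl⟩⟩
    have h2 := hnonempty.csInf_mem hfin
    rw [hd i]
    exact h2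
  choose z hz hzd using hzex
  have hzne : ∀ i j, z i ≠ y j := by intro i j h; exact hz i ⟨j, h.symm⟩
  have hd0 : ∀ i, 0 < d i := by
    intro i
    rw [hzd i]
    exact dist_pos.2 fun h => hzne i i h.symm
  have hCd : ∀ i j, i ≠ j → d i + d j ≤ C * dist (y i) (y j) := by
    intro i j hij
    have hdist : 0 < dist (y i) (y j) := dist_pos.2 fun h => hij (hy h)
    have h1 : (d i + d j) / dist (y i) (y j) ≤ C := by
      rw [hC]
      refine le_max_of_le_left ?_
      calc (d i + d j) / dist (y i) (y j)
          ≤ ⨆ (_ : i ≠ j), (d i + d j) / dist (y i) (y j) :=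
            le_ciSup (f := fun _ : i ≠ j => (d i + d j) / dist (y i) (y j)) (Set.toFinite _).bddAbove hij
        _ ≤ ⨆ j', ⨆ (_ : i ≠ j'), (d i + d j') / dist (y i) (y j') :=
            le_ciSup (f := fun j => ⨆ (_ : i ≠ j), (d i + d j) / dist (y i) (y j)) (Set.toFinite _).bddAbove j
        _ ≤ _ := le_ciSup (f := fun i => ⨆ j, ⨆ (_ : i ≠ j), (d i + d j) / dist (y i) (y j)) (Set.toFinite _).bddAbove i
    calc d i + d j = (d i + d j) / dist (y i) (y j) * dist (y i) (y j) := by field_simp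
      _ ≤ C * dist (y i) (y j) := mul_le_mul_of_nonneg_right h1 dist_nonneg

  -- indicator functions
  set ind : (Fin k → ℝ) → M → ℝ := fun a x => ∑ i, if x = y i then a i else 0 with hind
  have hind_y : ∀ (a : Fin k → ℝ) j, ind a (y j) = a j := by
    intro a j
    simp only [hind]
    rw [Finset.sum_eq_single j]
    · simp
    · intro i _ hij; rw [if_neg fun h => hij (hy h.symm)]
    · simp
  have hind_off : ∀ (a : Fin k → ℝ) x, x ∉ Set.range y → ind a x = 0 := by
    intro a x hx
    refine Finset.sum_eq_zero fun i _ => if_neg fun h => hx ⟨i, h.symm⟩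
  -- molecules
  set μ : Fin k → M → ℝ :=
    fun i x => (if x = y i then 1 else 0) - (if x = z i then 1 else 0) with hμ
  have hμsum : ∀ i, ∑ x, μ i x = 0 := by
    intro i
    simp [hμ, Finset.sum_sub_distrib, Finset.sum_ite_eq']
  have hμy : ∀ i j, μ j (y i) = if i = j then 1 else 0 := by
    intro i j
    simp only [hμ]
    rw [if_neg (show ¬ y i = z j from fun h => hzne j i h.symm), sub_zero]
    congr 1
    simp [hy.eq_iff]
  have hμpair : ∀ i (f : M → ℝ), ∑ p, μ i p * f p = f (y i) - f (z i) := by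
    intro i f
    simp [hμ, sub_mul, ite_mul, Finset.sum_sub_distrib, Finset.sum_ite_eq']
  have hΨval : ∀ (a : Fin k → ℝ) j, ∑ i, a i * μ i (y j) = a j := by
    intro a j
    rw [Finset.sum_eq_single j]
    · simp [hμy]
    · intro i _ hij; rw [hμy, if_neg fun h => hij h.symm, mul_zero]
    · simp

  -- the dual Lipschitz functions
  have hlip : ∀ a : Fin k → ℝ, (∀ i, |a i| ≤ d i) →
      LipschitzWith 1 (fun x => ind a x / C) := by
    intro a ha
    refine lip_of_abs _ fun u v => ?_
    by_cases hu : u ∈ Set.range y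
    · obtain ⟨i, rfl⟩ := hu
      by_cases hv : v ∈ Set.range y
      · obtain ⟨j, rfl⟩ := hv
        rcases eq_or_ne i j with rfl | hij
        · simp
        · rw [hind_y, hind_y, div_sub_div_same, abs_div, abs_of_pos hC0,
            div_le_iff₀ hC0]
          calc |a i - a j| ≤ |a i| + |a j| := abs_sub _ _
            _ ≤ d i + d j := add_le_add (ha i) (ha j)
            _ ≤ C * dist (y i) (y j) := hCd i j hij
            _ = dist (y i) (y j) * C := mul_comm _ _
      · rw [hind_y, hind_off a v hv, zero_div, sub_zero, abs_div, abs_of_pos hC0]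
        calc |a i| / C ≤ d i / C := by gcongr; exact ha i
          _ ≤ d i := div_le_self (hd0 i).le hC1
          _ ≤ dist (y i) v := hdle i v hv
    · rw [hind_off a u hu, zero_div, zero_sub, abs_neg]
      by_cases hv : v ∈ Set.range y
      · obtain ⟨j, rfl⟩ := hv
        rw [hind_y, abs_div, abs_of_pos hC0]
        calc |a j| / C ≤ d j / C := by gcongr; exact ha j
          _ ≤ d j := div_le_self (hd0 j).le hC1
          _ ≤ dist (y j) u := hdle j u hu
          _ = dist u (y j) := dist_comm _ _
      · rw [hind_off a v hv]
        simpa using dist_nonneg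
  -- free norm upper bound
  have hfree_up : ∀ b : Fin k → ℝ,
      freeNorm M (fun x => ∑ i, b i * μ i x) ≤ ∑ i, |b i| * d i := by
    intro b
    refine freeNorm_le _ (Finset.sum_nonneg fun i _ =>
      mul_nonneg (abs_nonneg _) (hd0 i).le) fun f hf => ?_
    have h1 : ∑ p, (∑ i, b i * μ i p) * f p = ∑ i, b i * (f (y i) - f (z i)) := by
      simp only [Finset.sum_mul]
      rw [Finset.sum_comm]
      refine Finset.sum_congr rfl fun i _ => ?_
      rw [← hμpair i f, Finset.mul_sum]
      exact Finset.sum_congr rfl fun p _ => by ring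
    rw [h1]
    refine Finset.sum_le_sum fun i _ => ?_
    calc b i * (f (y i) - f (z i)) ≤ |b i * (f (y i) - f (z i))| := le_abs_self _
      _ = |b i| * |f (y i) - f (z i)| := abs_mul _ _
      _ ≤ |b i| * d i := by
          refine mul_le_mul_of_nonneg_left ?_ (abs_nonneg _)
          have h2 := hf.dist_le_mul (y i) (z i)
          rw [Real.dist_eq, NNReal.coe_one, one_mul] at h2
          rw [hzd i]
          exact h2

  -- free norm lower bound
  have hfree_low : ∀ m : M → ℝ, (∑ p, m p = 0) →
      (∑ i, |m (y i)| * d i) / C ≤ freeNorm M m := by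
    intro m hm
    set a : Fin k → ℝ := fun i => (if m (y i) < 0 then (-1:ℝ) else 1) * d i with ha
    have haa : ∀ i, |a i| ≤ d i := by
      intro i
      rw [ha]
      simp only []
      split_ifs <;> simp [abs_of_pos (hd0 i), (hd0 i).le, abs_mul]
    have hval : ∑ p, m p * (ind a p / C) = (∑ i, |m (y i)| * d i) / C := by
      have h1 : ∑ p, m p * (ind a p / C) = (∑ p, m p * ind a p) / C := by
        rw [Finset.sum_div]
        exact Finset.sum_congr rfl fun p _ => by ring
      rw [h1]
      congr 1
      have h2 : ∀ p, m p * ind a p = ∑ i, if p = y i then m p * a i else 0 := by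
        intro p
        rw [hind]
        simp only []
        rw [Finset.mul_sum]
        exact Finset.sum_congr rfl fun i _ => by split_ifs <;> ring
      simp only [h2]
      rw [Finset.sum_comm]
      refine Finset.sum_congr rfl fun i _ => ?_
      have h3 : ∑ p, (if p = y i then m p * a i else 0) = m (y i) * a i := by
        rw [Finset.sum_ite_eq' Finset.univ (y i) (fun p => m p * a i),
          if_pos (Finset.mem_univ _)]
      rw [h3, ha]
      simp only []
      rcases lt_or_ge (m (y i)) 0 with hlt | hge
      · rw [if_pos hlt, abs_of_neg hlt]; ring
      · rw [if_neg (not_lt.2 hge), abs_of_nonneg hge]; ring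
    calc (∑ i, |m (y i)| * d i) / C = ∑ p, m p * (ind a p / C) := hval.symm
      _ ≤ freeNorm M m := le_freeNorm m O hm _ (hlip a haa)

  have hmol : ∀ m : M → ℝ, m ∈ molecules M ↔ ∑ p, m p = 0 := fun m => Iff.rfl
  -- generic Lipschitz bound for indicator-type functions
  have hkey : ∀ (b : Fin k → ℝ) (B : ℝ), 0 ≤ B → (∀ i, |b i| ≤ B * d i) →
      ∀ u v : M, |ind b u - ind b v| ≤ C * B * dist u v := by
    intro b B hB hb u v
    by_cases hu : u ∈ Set.range y
    · obtain ⟨i, rfl⟩ := hu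
      by_cases hv : v ∈ Set.range y
      · obtain ⟨j, rfl⟩ := hv
        rcases eq_or_ne i j with rfl | hij
        · simp
        · rw [hind_y, hind_y]
          calc |b i - b j| ≤ |b i| + |b j| := abs_sub _ _
            _ ≤ B * d i + B * d j := add_le_add (hb i) (hb j)
            _ = B * (d i + d j) := by ring
            _ ≤ B * (C * dist (y i) (y j)) := mul_le_mul_of_nonneg_left (hCd i j hij) hB
            _ = C * B * dist (y i) (y j) := by ring
      · rw [hind_y, hind_off b v hv, sub_zero]
        calc |b i| ≤ B * d i := hb i
          _ ≤ B * dist (y i) v := mul_le_mul_of_nonneg_left (hdle i v hv) hB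
          _ ≤ C * B * dist (y i) v := by
              rw [mul_assoc]
              exact le_mul_of_one_le_left (mul_nonneg hB dist_nonneg) hC1
    · rw [hind_off b u hu]
      by_cases hv : v ∈ Set.range y
      · obtain ⟨j, rfl⟩ := hv
        rw [hind_y, zero_sub, abs_neg]
        calc |b j| ≤ B * d j := hb j
          _ ≤ B * dist (y j) u := mul_le_mul_of_nonneg_left (hdle j u hu) hB
          _ ≤ C * B * dist (y j) u := by
              rw [mul_assoc]
              exact le_mul_of_one_le_left (mul_nonneg hB dist_nonneg) hC1
          _ = C * B * dist u (y j) := by rw [dist_comm]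
      · rw [hind_off b v hv, sub_zero, abs_zero]
        positivity

  -- the free-space side
  let Ψ : (Fin k → ℝ) →ₗ[ℝ] (M → ℝ) :=
    { toFun := fun a x => ∑ i, a i * μ i x
      map_add' := by
        intro a b; funext x
        simp only [Pi.add_apply, add_mul]
        rw [Finset.sum_add_distrib]
      map_smul' := by
        intro c a; funext x
        simp only [Pi.smul_apply, smul_eq_mul, RingHom.id_apply]
        rw [Finset.mul_sum]
        exact Finset.sum_congr rfl fun i _ => by ring }
  have hΨapp : ∀ a, (Ψ a : M → ℝ) = fun x => ∑ i, a i * μ i x := fun a => rfl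
  have hΨy : ∀ (a : Fin k → ℝ) j, (Ψ a : M → ℝ) (y j) = a j := by
    intro a j
    rw [hΨapp]
    exact hΨval a j
  have hsum0 : ∀ a : Fin k → ℝ, ∑ p, (Ψ a : M → ℝ) p = 0 := by
    intro a
    rw [hΨapp]
    rw [Finset.sum_comm]
    simp [← Finset.mul_sum, hμsum]
  have hYle : LinearMap.range Ψ ≤ molecules M := by
    rintro m ⟨a, rfl⟩
    exact (hmol _).2 (hsum0 a)
  let T : (LinearMap.range Ψ) ≃ₗ[ℝ] (Fin k → ℝ) :=
    { toFun := fun u i => (u : M → ℝ) (y i) * (d i / C)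
      map_add' := by
        intro u v; funext i
        simp only [Submodule.coe_add, Pi.add_apply]
        ring
      map_smul' := by
        intro c u; funext i
        simp only [SetLike.val_smul, Pi.smul_apply, smul_eq_mul, RingHom.id_apply]
        ring
      invFun := fun b => ⟨Ψ (fun i => b i * (C / d i)), ⟨_, rfl⟩⟩
      left_inv := by
        rintro ⟨u, a, rfl⟩
        apply Subtype.ext
        show Ψ _ = Ψ a
        congr 1
        funext i
        simp only [hΨy]
        field_simp [(hd0 i).ne', hC0.ne']
      right_inv := by
        intro b
        funext i
        show (Ψ (fun i => b i * (C / d i)) : M → ℝ) (y i) * (d i / C) = b i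
        simp only [hΨy]
        field_simp [(hd0 i).ne', hC0.ne'] }
  have hT : ∀ u : LinearMap.range Ψ, T u = fun i => (u : M → ℝ) (y i) * (d i / C) :=
    fun u => rfl
  have hl1T : ∀ u : LinearMap.range Ψ,
      l1norm (T u) = (∑ i, |(u : M → ℝ) (y i)| * d i) / C := by
    intro u
    rw [hT]
    simp only [l1norm]
    rw [Finset.sum_div]
    refine Finset.sum_congr rfl fun i _ => ?_
    rw [abs_mul, abs_of_pos (div_pos (hd0 i) hC0)]
    ring

  have hTnorm : ∀ u : LinearMap.range Ψ,
      l1norm (T u) ≤ freeNorm M (u : M → ℝ) ∧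
        freeNorm M (u : M → ℝ) ≤ C * l1norm (T u) := by
    intro u
    obtain ⟨a, ha⟩ := u.2
    have hua : ∀ j, (u : M → ℝ) (y j) = a j := by intro j; rw [← ha]; exact hΨy a j
    have hufun : (u : M → ℝ) = fun x => ∑ i, a i * μ i x := by rw [← ha]; exact hΨapp a
    have hsum : ∑ p, (u : M → ℝ) p = 0 := by rw [← ha]; exact hsum0 a
    rw [hl1T]
    constructor
    · exact hfree_low _ hsum
    · have h1 : freeNorm M (u : M → ℝ) ≤ ∑ i, |a i| * d i := by
        rw [hufun]; exact hfree_up a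
      have h2 : C * ((∑ i, |(u : M → ℝ) (y i)| * d i) / C) = ∑ i, |a i| * d i := by
        rw [mul_comm, div_mul_cancel₀ _ hC0.ne']
        exact Finset.sum_congr rfl fun i _ => by rw [hua]
      rw [h2]
      exact h1
  let Pfree : (M → ℝ) →ₗ[ℝ] (M → ℝ) :=
    { toFun := fun m => Ψ (fun i => m (y i))
      map_add' := by
        intro m n
        show Ψ (fun i => (m + n) (y i)) = Ψ (fun i => m (y i)) + Ψ (fun i => n (y i))
        have h : (fun i => (m + n) (y i)) = (fun i => m (y i)) + fun i => n (y i) := rfl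
        rw [h, map_add]
      map_smul' := by
        intro c m
        show Ψ (fun i => (c • m) (y i)) = c • Ψ (fun i => m (y i))
        have h : (fun i => (c • m) (y i)) = c • fun i => m (y i) := rfl
        rw [h, map_smul] }
  have hPfree : ∀ m : M → ℝ, Pfree m = Ψ (fun i => m (y i)) := fun m => rfl
  have hfreeside : ∃ Y : Submodule ℝ (M → ℝ), Y ≤ molecules M ∧
      (∃ T : Y ≃ₗ[ℝ] (Fin k → ℝ),
        ∀ u : Y, l1norm (T u) ≤ freeNorm M u ∧ freeNorm M u ≤ C * l1norm (T u)) ∧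
      (∃ P : (M → ℝ) →ₗ[ℝ] (M → ℝ),
        (∀ m ∈ molecules M, P m ∈ Y) ∧ (∀ u ∈ Y, P u = u) ∧
        ∀ m ∈ molecules M, freeNorm M (P m) ≤ C * freeNorm M m) := by
    refine ⟨LinearMap.range Ψ, hYle, ⟨T, hTnorm⟩, Pfree, ?_, ?_, ?_⟩
    · intro m _; exact ⟨_, rfl⟩
    · rintro u ⟨a, rfl⟩
      rw [hPfree]
      congr 1
      funext i
      exact hΨy a i
    · intro m hm
      have h1 : freeNorm M (Pfree m) ≤ ∑ i, |m (y i)| * d i := by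
        rw [hPfree, hΨapp]
        exact hfree_up _
      have h2 := hfree_low m ((hmol m).1 hm)
      calc freeNorm M (Pfree m) ≤ ∑ i, |m (y i)| * d i := h1
        _ = C * ((∑ i, |m (y i)| * d i) / C) := by
            rw [mul_comm, div_mul_cancel₀ _ hC0.ne']
        _ ≤ C * freeNorm M m := mul_le_mul_of_nonneg_left h2 hC0.le

  -- the Lipschitz side
  let Ψ' : (Fin k → ℝ) →ₗ[ℝ] (M → ℝ) :=
    { toFun := fun a => ind a
      map_add' := by
        intro a b; funext x
        simp only [hind, Pi.add_apply]
        rw [← Finset.sum_add_distrib]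
        exact Finset.sum_congr rfl fun i _ => by split_ifs <;> simp
      map_smul' := by
        intro c a; funext x
        simp only [hind, Pi.smul_apply, smul_eq_mul, RingHom.id_apply]
        rw [Finset.mul_sum]
        exact Finset.sum_congr rfl fun i _ => by split_ifs <;> simp }
  have hΨ'app : ∀ a, (Ψ' a : M → ℝ) = ind a := fun a => rfl
  have hZ0 : ∀ f ∈ LinearMap.range Ψ', f O = 0 := by
    rintro f ⟨a, rfl⟩
    rw [hΨ'app]
    exact hind_off a O hO
  let S : (LinearMap.range Ψ') ≃ₗ[ℝ] (Fin k → ℝ) :=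
    { toFun := fun f i => (f : M → ℝ) (y i) / d i
      map_add' := by
        intro f g; funext i
        simp only [Submodule.coe_add, Pi.add_apply]
        rw [add_div]
      map_smul' := by
        intro c f; funext i
        simp only [SetLike.val_smul, Pi.smul_apply, smul_eq_mul, RingHom.id_apply]
        rw [mul_div_assoc]
      invFun := fun b => ⟨Ψ' (fun i => b i * d i), ⟨_, rfl⟩⟩
      left_inv := by
        rintro ⟨f, a, rfl⟩
        apply Subtype.ext
        show Ψ' _ = Ψ' a
        congr 1
        funext i
        simp only [hΨ'app, hind_y]
        field_simp [(hd0 i).ne']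
      right_inv := by
        intro b
        funext i
        show (Ψ' (fun i => b i * d i) : M → ℝ) (y i) / d i = b i
        simp only [hΨ'app, hind_y]
        rw [mul_div_assoc, div_self (hd0 i).ne', mul_one] }
  have hS : ∀ f : LinearMap.range Ψ', S f = fun i => (f : M → ℝ) (y i) / d i :=
    fun f => rfl
  have hSnorm : ∀ f : LinearMap.range Ψ',
      ‖S f‖ ≤ lipNorm M (f : M → ℝ) ∧ lipNorm M (f : M → ℝ) ≤ C * ‖S f‖ := by
    intro f
    obtain ⟨a, ha⟩ := f.2
    have hfy : ∀ j, (f : M → ℝ) (y j) = a j := by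
      intro j; rw [← ha, hΨ'app]; exact hind_y a j
    have hfoff : ∀ x, x ∉ Set.range y → (f : M → ℝ) x = 0 := by
      intro x hx; rw [← ha, hΨ'app]; exact hind_off a x hx
    have hfind : (f : M → ℝ) = ind a := by rw [← ha]; exact hΨ'app a
    constructor
    · rw [pi_norm_le_iff_of_nonneg (lipNorm_nonneg _)]
      intro i
      have h2 : (S f) i = a i / d i := by rw [hS]; simp [hfy]
      rw [h2, Real.norm_eq_abs, abs_div, abs_of_pos (hd0 i), div_le_iff₀ (hd0 i)]
      have h1 : |(f : M → ℝ) (y i) - (f : M → ℝ) (z i)| ≤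
          lipNorm M (f : M → ℝ) * dist (y i) (z i) := abs_sub_le_lipNorm _ _ _
      rw [hfoff (z i) (hz i), sub_zero, ← hzd i] at h1
      rwa [hfy] at h1
    · have hb : ∀ i, |a i| ≤ ‖S f‖ * d i := by
        intro i
        have h1 : ‖(S f) i‖ ≤ ‖S f‖ := norm_le_pi_norm (S f) i
        have h2 : (S f) i = a i / d i := by rw [hS]; simp [hfy]
        rw [h2, Real.norm_eq_abs, abs_div, abs_of_pos (hd0 i), div_le_iff₀ (hd0 i)] at h1
        exact h1
      rw [hfind]
      exact lipNorm_le _ (mul_nonneg hC0.le (norm_nonneg _)) fun u v => by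
        have := hkey a (‖S f‖) (norm_nonneg _) hb u v
        calc |ind a u - ind a v| ≤ C * ‖S f‖ * dist u v := this
          _ = C * ‖S f‖ * dist u v := rfl
  let Plip : (M → ℝ) →ₗ[ℝ] (M → ℝ) :=
    { toFun := fun f => Ψ' (fun i => f (y i) - f (z i))
      map_add' := by
        intro f g
        show Ψ' (fun i => (f + g) (y i) - (f + g) (z i)) =
          Ψ' (fun i => f (y i) - f (z i)) + Ψ' (fun i => g (y i) - g (z i))
        have h : (fun i => (f + g) (y i) - (f + g) (z i)) =
            (fun i => f (y i) - f (z i)) + fun i => g (y i) - g (z i) := by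
          funext i; simp [Pi.add_apply]; ring
        rw [h, map_add]
      map_smul' := by
        intro c f
        show Ψ' (fun i => (c • f) (y i) - (c • f) (z i)) = c • Ψ' (fun i => f (y i) - f (z i))
        have h : (fun i => (c • f) (y i) - (c • f) (z i)) =
            c • fun i => f (y i) - f (z i) := by
          funext i; simp [Pi.smul_apply, smul_eq_mul]; ring
        rw [h, map_smul] }
  have hPlip : ∀ f : M → ℝ, Plip f = Ψ' (fun i => f (y i) - f (z i)) := fun f => rfl
  have hlipside : ∃ Z : Submodule ℝ (M → ℝ), (∀ f ∈ Z, f O = 0) ∧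
      (∃ S : Z ≃ₗ[ℝ] (Fin k → ℝ),
        ∀ f : Z, ‖S f‖ ≤ lipNorm M f ∧ lipNorm M f ≤ C * ‖S f‖) ∧
      (∃ P : (M → ℝ) →ₗ[ℝ] (M → ℝ),
        (∀ f : M → ℝ, f O = 0 → P f ∈ Z) ∧ (∀ f ∈ Z, P f = f) ∧
        ∀ f : M → ℝ, f O = 0 → lipNorm M (P f) ≤ C * lipNorm M f) := by
    refine ⟨LinearMap.range Ψ', hZ0, ⟨S, hSnorm⟩, Plip, ?_, ?_, ?_⟩
    · intro f _; exact ⟨_, rfl⟩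
    · rintro f ⟨a, rfl⟩
      rw [hPlip]
      congr 1
      funext i
      rw [hΨ'app, hind_y, hind_off a (z i) (hz i), sub_zero]
    · intro f _
      rw [hPlip, hΨ'app]
      have hb : ∀ i, |f (y i) - f (z i)| ≤ lipNorm M f * d i := by
        intro i
        have h1 := abs_sub_le_lipNorm f (y i) (z i)
        rwa [← hzd i] at h1
      exact lipNorm_le _ (mul_nonneg hC0.le (lipNorm_nonneg _))
        (hkey _ (lipNorm M f) (lipNorm_nonneg _) hb)
  exact ⟨hfreeside, hlipside⟩
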